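/- Let L be a regular language over a finite linearly ordered alphabet Σ, let D₀ be a minimal DFA for L (every state reachable from the initial state, every state able to reach a final state, and any two words of Pref(L) that are Myhill–Nerode equivalent for L reach the same state), and let D be any DFA with L(D) = L (every state reachable and useful). If Q' is a set of states of D₀ entangled in D₀, then there exists a set Q'' of states of D, entangled in D, with |Q''| = |Q'|. Consequently ent(D₀) ≤ ent(D), i.e., the minimal DFA realizes the entanglement of the language: ent(D₀) = ent(L). -/

import Mathlib

/-! For each `q ∈ Q'`, pigeonhole yields a state `g q` of `D` visited infinitely often at times
when `D0` is in `q`; the same sequence witnesses that `g '' Q'` is entangled in `D`, and `g` is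
injective because words reaching the same state of `D` are Nerode-equivalent, hence reach the
same state of the minimal DFA `D0`. -/

/-- Strict co-lexicographic order on words: compare reversed words lexicographically. -/
def colexLt {A : Type} [LinearOrder A] (α β : List A) : Prop :=
  List.Lex (· < ·) α.reverse β.reverse

/-- Co-lexicographic order (reflexive version). -/
def colexLe {A : Type} [LinearOrder A] (α β : List A) : Prop :=
  colexLt α β ∨ α = β

/-- The prefix closure of a language. -/
def Pref {A : Type} (L : Set (List A)) : Set (List A) :=
  {α | ∃ γ : List A, α ++ γ ∈ L}

/-- The Myhill–Nerode equivalence of a language. -/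
def NerodeEq {A : Type} (L : Set (List A)) (α β : List A) : Prop :=
  ∀ γ : List A, α ++ γ ∈ L ↔ β ++ γ ∈ L

/-- A monotone (nondecreasing or nonincreasing) sequence of words w.r.t. co-lex order. -/
def MonotoneSeq {A : Type} [LinearOrder A] (α : ℕ → List A) : Prop :=
  (∀ i, colexLe (α i) (α (i + 1))) ∨ (∀ i, colexLe (α (i + 1)) (α i))

/-- A partition of the state set into `p` chains with respect to the relation `le`. -/
def IsChainPartition {Q : Type} (le : Q → Q → Prop) (p : ℕ) (f : Fin p → Set Q) : Prop :=
  (∀ q : Q, ∃! i : Fin p, q ∈ f i) ∧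
  ∀ i : Fin p, ∀ u ∈ f i, ∀ v ∈ f i, le u v ∨ le v u

/-- A deterministic finite automaton (with possibly undefined transitions). -/
structure DFA' (A Q : Type) where
  start : Q
  delta : Q → A → Option Q
  accept : Set Q

namespace DFA'

variable {A Q : Type}

/-- Extended (partial) transition function on words. -/
def deltaStar (D : DFA' A Q) : Q → List A → Option Q
  | q, [] => some q
  | q, a :: w => (D.delta q a).bind fun r => D.deltaStar r w

/-- `D.Iq q` is the set of words reaching `q` from the initial state. -/
def Iq (D : DFA' A Q) (q : Q) : Set (List A) :=
  {α | D.deltaStar D.start α = some q}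

/-- The accepted language. -/
def lang (D : DFA' A Q) : Set (List A) :=
  {α | ∃ q ∈ D.accept, D.deltaStar D.start α = some q}

/-- Labels of transitions entering a state, with the extra bottom symbol `#`
added exactly for the initial state. -/
def lam (D : DFA' A Q) (q : Q) : Set (WithBot A) :=
  {x | ∃ (a : A) (u : Q), x = (a : WithBot A) ∧ D.delta u a = some q} ∪
    {x | q = D.start ∧ x = (⊥ : WithBot A)}

/-- Every state is reachable from the initial state. -/
def Reachable (D : DFA' A Q) : Prop :=
  ∀ q : Q, ∃ α : List A, D.deltaStar D.start α = some q

/-- Every state can reach a final state. -/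
def Useful (D : DFA' A Q) : Prop :=
  ∀ q : Q, ∃ (β : List A) (f : Q), f ∈ D.accept ∧ D.deltaStar q β = some f

/-- The relation `≤_D`: `u ≤_D v` iff `u = v` or every word reaching `u` is
co-lexicographically strictly smaller than every word reaching `v`. -/
def leD [LinearOrder A] (D : DFA' A Q) (u v : Q) : Prop :=
  u = v ∨ ∀ α ∈ D.Iq u, ∀ β ∈ D.Iq v, colexLt α β

/-- The strict relation `<_D`. -/
def ltD [LinearOrder A] (D : DFA' A Q) (u v : Q) : Prop :=
  u ≠ v ∧ ∀ α ∈ D.Iq u, ∀ β ∈ D.Iq v, colexLt α β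

/-- A set of states of a DFA is entangled if some monotone sequence of words of
`Pref (L(D))` visits every state of the set infinitely often. -/
def Entangled [LinearOrder A] (D : DFA' A Q) (Q' : Set Q) : Prop :=
  ∃ α : ℕ → List A, (∀ i, α i ∈ Pref D.lang) ∧ MonotoneSeq α ∧
    ∀ q ∈ Q', {i : ℕ | D.deltaStar D.start (α i) = some q}.Infinite

end DFA'

/-- A co-lex order on a DFA: a partial order on the states satisfying Axioms 1 and 2. -/
structure IsColexDFA {A Q : Type} [LinearOrder A] (D : DFA' A Q) (le : Q → Q → Prop) : Prop where
  refl : ∀ u, le u u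
  antisymm : ∀ u v, le u v → le v u → u = v
  trans : ∀ u v w, le u v → le v w → le u w
  ax1 : ∀ u v, le u v → u ≠ v → ∀ a ∈ D.lam u, ∀ b ∈ D.lam v, a ≤ b
  ax2 : ∀ (a : A) (u v u' v' : Q),
      D.delta u' a = some u → D.delta v' a = some v → le u v → u ≠ v → le u' v'

theorem Set.Infinite.exists_infinite_fiber {α β : Type*} [Finite β] {s : Set α}
    (hs : s.Infinite) (f : α → β) : ∃ b, (s ∩ f ⁻¹' {b}).Infinite := by
  by_contra! hfin
  exact hs (Set.Finite.of_finite_fibers f (Set.toFinite _) fun b _ => hfin b)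

namespace DFA'

variable {A Q : Type}

theorem deltaStar_append (D : DFA' A Q) (q : Q) (α γ : List A) :
    D.deltaStar q (α ++ γ) = (D.deltaStar q α).bind fun r => D.deltaStar r γ := by
  induction α generalizing q with
  | nil => rfl
  | cons a w ih =>
    simp only [List.cons_append, deltaStar]
    cases D.delta q a <;> simp [ih]

theorem exists_deltaStar_of_mem_pref (D : DFA' A Q) {β : List A} (h : β ∈ Pref D.lang) :
    ∃ p, D.deltaStar D.start β = some p := by
  obtain ⟨γ, f, -, hrun⟩ := h
  rw [deltaStar_append] at hrun
  cases hβ : D.deltaStar D.start β with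
  | none => simp [hβ] at hrun
  | some p => exact ⟨p, rfl⟩

theorem nerodeEq_of_deltaStar_eq (D : DFA' A Q) {β₁ β₂ : List A}
    (h : D.deltaStar D.start β₁ = D.deltaStar D.start β₂) : NerodeEq D.lang β₁ β₂ := by
  intro γ
  simp only [lang, Set.mem_ofPred_eq, deltaStar_append, h]

end DFA'

theorem stmt_8_general {A Q0 Q : Type} [LinearOrder A] [Fintype Q]
    (L : Set (List A)) (D0 : DFA' A Q0) (D : DFA' A Q)
    (hL0 : D0.lang = L)
    (hmin : ∀ α ∈ Pref L, ∀ β ∈ Pref L, NerodeEq L α β →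
        D0.deltaStar D0.start α = D0.deltaStar D0.start β)
    (hL : D.lang = L)
    (Q' : Set Q0) (hent : D0.Entangled Q') :
    ∃ Q'' : Set Q, D.Entangled Q'' ∧ Q''.ncard = Q'.ncard := by
  obtain ⟨α, hpref, hmono, hinf⟩ := hent
  rw [hL0] at hpref
  have hprefD : ∀ i, α i ∈ Pref D.lang := hL ▸ hpref
  choose F hF using fun i => D.exists_deltaStar_of_mem_pref (hprefD i)
  have : Nonempty Q := ⟨D.start⟩
  choose! g hg using fun q hq => (hinf q hq).exists_infinite_fiber F
  refine ⟨g '' Q', ⟨α, hprefD, hmono, ?_⟩, Set.InjOn.ncard_image ?_⟩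
  · rintro _ ⟨q, hq, rfl⟩
    refine (hg q hq).mono fun i hi => ?_
    obtain ⟨-, (hFi : F i = g q)⟩ := hi
    rw [Set.mem_ofPred_eq, hF i, hFi]
  · intro q₁ hq₁ q₂ hq₂ hg₁₂
    obtain ⟨i, (hi : _ = some q₁), (hFi : F i = g q₁)⟩ := (hg q₁ hq₁).nonempty
    obtain ⟨j, (hj : _ = some q₂), (hFj : F j = g q₂)⟩ := (hg q₂ hq₂).nonempty
    have hD : D.deltaStar D.start (α i) = D.deltaStar D.start (α j) := by
      rw [hF i, hF j, hFi, hFj, hg₁₂]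
    have hD0 := hmin _ (hpref i) _ (hpref j) (hL ▸ D.nerodeEq_of_deltaStar_eq hD)
    rw [hi, hj] at hD0
    exact Option.some.inj hD0

/-- any set of states entangled in the minimal DFA `D0` of `L`
gives rise to an equally large set of states entangled in any DFA `D`
accepting `L`; hence the minimal DFA realizes the entanglement of `L`. -/
theorem stmt_8 {A Q0 Q : Type} [LinearOrder A] [Fintype A] [Fintype Q0] [Fintype Q]
    (L : Set (List A)) (D0 : DFA' A Q0) (D : DFA' A Q)
    (h0reach : D0.Reachable) (h0use : D0.Useful) (hL0 : D0.lang = L)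
    (hmin : ∀ α ∈ Pref L, ∀ β ∈ Pref L, NerodeEq L α β →
        D0.deltaStar D0.start α = D0.deltaStar D0.start β)
    (hreach : D.Reachable) (huse : D.Useful) (hL : D.lang = L)
    (Q' : Set Q0) (hent : D0.Entangled Q') :
    ∃ Q'' : Set Q, D.Entangled Q'' ∧ Q''.ncard = Q'.ncard :=
  stmt_8_general L D0 D hL0 hmin hL Q' hent
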